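/- The set of p-predictable reals is null: for every partial function p from finite binary strings to Bool (e.g. p : List Bool → Option Bool), the set of reals y ∈ 2^ω such that p(y↾n) is defined for infinitely many n and y(n) = p(y↾n) whenever p(y↾n) is defined, has μ-measure zero. -/

import Mathlib

open MeasureTheory

def pre (x : ℕ → Bool) (n : ℕ) : List Bool := (List.range n).map x
def cyl (σ : List Bool) : Set (ℕ → Bool) := {x | pre x σ.length = σ}

lemma pre_length (x : ℕ → Bool) (n : ℕ) : (pre x n).length = n := by
  simp [pre]

lemma pre_take (x : ℕ → Bool) {m n : ℕ} (h : m ≤ n) : (pre x n).take m = pre x m := by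
  simp [pre, ← List.map_take, List.take_range, Nat.min_eq_left h]

lemma pre_succ (x : ℕ → Bool) (n : ℕ) : pre x (n+1) = pre x n ++ [x n] := by
  simp [pre, List.range_succ]

lemma pre_getElem (x : ℕ → Bool) (n i : ℕ) (h : i < n) :
    (pre x n)[i]'(by simpa [pre_length] using h) = x i := by
  simp [pre]

lemma mem_cyl {x : ℕ → Bool} {σ : List Bool} :
    x ∈ cyl σ ↔ ∀ i : Fin σ.length, x i = σ[(i:ℕ)] := by
  constructor
  · intro hx i
    calc x i = (pre x σ.length)[(i:ℕ)]'(by simp [pre_length]) :=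
          (pre_getElem x σ.length i i.2).symm
      _ = σ[(i:ℕ)] := List.getElem_of_eq hx _
  · intro h
    show pre x σ.length = σ
    apply List.ext_getElem (pre_length x _)
    intro i h1 h2
    rw [pre_getElem x _ i (by simpa [pre_length] using h1)]
    exact h ⟨i, h2⟩

lemma cyl_measurable (σ : List Bool) : MeasurableSet (cyl σ) := by
  have : cyl σ = ⋂ i : Fin σ.length, (fun x : ℕ → Bool => x i) ⁻¹' {σ[(i:ℕ)]} := by
    ext x; simp [mem_cyl]
  rw [this]
  exact MeasurableSet.iInter fun i => (measurable_pi_apply _) (measurableSet_singleton _)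

lemma cyl_subset {ρ σ : List Bool} (h : ρ <+: σ) : cyl σ ⊆ cyl ρ := by
  intro x hx
  have hl : ρ.length ≤ σ.length := h.length_le
  show pre x ρ.length = ρ
  rw [← pre_take x hl, hx]
  exact (List.prefix_iff_eq_take.mp h).symm

lemma cyl_disjoint {σ τ : List Bool} (h1 : ¬ σ <+: τ) (h2 : ¬ τ <+: σ) :
    Disjoint (cyl σ) (cyl τ) := by
  rw [Set.disjoint_left]
  intro x hx hx'
  rcases le_total σ.length τ.length with h | h
  · exact h1 (by rw [List.prefix_iff_eq_take, ← hx', pre_take x h, hx])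
  · exact h2 (by rw [List.prefix_iff_eq_take, ← hx, pre_take x h, hx'])

/-- Kraft inequality from the measure hypothesis: an antichain of strings all
extending `ρ` has total weight at most `(1/2)^|ρ|`. -/
lemma kraft (μ : Measure (ℕ → Bool))
    (hμ : ∀ σ : List Bool, μ (cyl σ) = (1 / 2 : ENNReal) ^ σ.length)
    (ρ : List Bool) (S : Set (List Bool))
    (hS : ∀ σ ∈ S, ρ <+: σ)
    (hanti : ∀ σ ∈ S, ∀ τ ∈ S, σ ≠ τ → ¬ σ <+: τ) :
    ∑' σ : S, (1 / 2 : ENNReal) ^ (σ : List Bool).length ≤ (1 / 2 : ENNReal) ^ ρ.length := by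
  calc ∑' σ : S, (1 / 2 : ENNReal) ^ (σ : List Bool).length
      = ∑' σ : S, μ (cyl σ) := tsum_congr fun σ => (hμ σ).symm
    _ = μ (⋃ σ : S, cyl (σ : List Bool)) := by
        refine (measure_iUnion ?_ fun σ => cyl_measurable _).symm
        intro σ τ hne
        exact cyl_disjoint (hanti σ σ.2 τ τ.2 fun h => hne (Subtype.ext h))
          (hanti τ τ.2 σ σ.2 fun h => hne (Subtype.ext h.symm))
    _ ≤ μ (cyl ρ) := by
        refine measure_mono ?_
        rintro x hx
        rcases Set.mem_iUnion.mp hx with ⟨σ, hxσ⟩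
        exact cyl_subset (hS σ σ.2) hxσ
    _ = _ := hμ ρ

/-- Strings extending `ρ` on which `p` is next defined (and undefined strictly between). -/
def Tset (p : List Bool → Option Bool) (ρ : List Bool) : Set (List Bool) :=
  {τ | ρ <+: τ ∧ (∀ m, ρ.length ≤ m → m < τ.length → p (τ.take m) = none) ∧ (p τ).isSome}

/-- Such strings together with the predicted bit appended. -/
def Fset (p : List Bool → Option Bool) (ρ : List Bool) : Set (List Bool) :=
  {σ | ∃ τ ∈ Tset p ρ, ∃ b, p τ = some b ∧ σ = τ ++ [b]}

def Dset (p : List Bool → Option Bool) : ℕ → Set (List Bool)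
  | 0 => {[]}
  | (k+1) => ⋃ ρ ∈ Dset p k, Fset p ρ

lemma Tset_anti (p : List Bool → Option Bool) (ρ : List Bool) :
    ∀ τ ∈ Tset p ρ, ∀ τ' ∈ Tset p ρ, τ ≠ τ' → ¬ τ <+: τ' := by
  rintro τ ⟨hρ, _, hsome⟩ τ' ⟨_, hund', _⟩ hne hpre
  have hlt : τ.length < τ'.length :=
    lt_of_le_of_ne hpre.length_le fun h => hne (List.IsPrefix.eq_of_length hpre h)
  have h0 := hund' τ.length hρ.length_le hlt
  rw [← List.prefix_iff_eq_take.mp hpre] at h0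
  rw [h0] at hsome
  simp at hsome

lemma Fset_sum (p : List Bool → Option Bool) (μ : Measure (ℕ → Bool))
    (hμ : ∀ σ : List Bool, μ (cyl σ) = (1 / 2 : ENNReal) ^ σ.length) (ρ : List Bool) :
    ∑' σ : Fset p ρ, (1 / 2 : ENNReal) ^ (σ : List Bool).length
      ≤ (1 / 2 : ENNReal) ^ (ρ.length + 1) := by
  have hgood : ∀ σ : Fset p ρ, (σ : List Bool).dropLast ∈ Tset p ρ ∧
      ∃ b, p (σ : List Bool).dropLast = some b ∧ (σ : List Bool) = (σ : List Bool).dropLast ++ [b] := by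
    rintro ⟨σ, τ, hτ, b, hb, rfl⟩
    simp only [List.dropLast_concat]
    exact ⟨hτ, b, hb, rfl⟩
  set e : Fset p ρ → Tset p ρ := fun σ => ⟨(σ : List Bool).dropLast, (hgood σ).1⟩ with he
  have hinj : Function.Injective e := by
    rintro σ σ' h
    obtain ⟨b, hb, hσ⟩ := (hgood σ).2
    obtain ⟨b', hb', hσ'⟩ := (hgood σ').2
    have hd : (σ : List Bool).dropLast = (σ' : List Bool).dropLast := congrArg Subtype.val h
    apply Subtype.ext
    rw [hσ, hσ', hd]
    rw [hd] at hb
    rw [hb] at hb'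
    simp only [Option.some.injEq] at hb'
    rw [hb']
  have hlen : ∀ σ : Fset p ρ, (σ : List Bool).length = (σ : List Bool).dropLast.length + 1 := by
    intro σ
    obtain ⟨b, _, hσ⟩ := (hgood σ).2
    conv_lhs => rw [hσ]
    simp
  calc ∑' σ : Fset p ρ, (1 / 2 : ENNReal) ^ (σ : List Bool).length
      = ∑' σ : Fset p ρ, (1 / 2) * (1 / 2 : ENNReal) ^ ((e σ : List Bool)).length := by
        refine tsum_congr fun σ => ?_
        rw [hlen σ, pow_succ]
        ring
    _ = (1 / 2) * ∑' σ : Fset p ρ, (1 / 2 : ENNReal) ^ ((e σ : List Bool)).length :=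
        ENNReal.tsum_mul_left
    _ ≤ (1 / 2) * ∑' τ : Tset p ρ, (1 / 2 : ENNReal) ^ ((τ : List Bool)).length := by
        gcongr
        exact ENNReal.tsum_comp_le_tsum_of_injective hinj
          (fun τ : Tset p ρ => (1 / 2 : ENNReal) ^ ((τ : List Bool)).length)
    _ ≤ (1 / 2) * (1 / 2 : ENNReal) ^ ρ.length := by
        gcongr
        exact kraft μ hμ ρ _ (fun τ hτ => hτ.1) (Tset_anti p ρ)
    _ = (1 / 2 : ENNReal) ^ (ρ.length + 1) := by rw [pow_succ]; ring

lemma Dsum_le (p : List Bool → Option Bool) (μ : Measure (ℕ → Bool))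
    (hμ : ∀ σ : List Bool, μ (cyl σ) = (1 / 2 : ENNReal) ^ σ.length) :
    ∀ k, ∑' σ : Dset p k, (1 / 2 : ENNReal) ^ (σ : List Bool).length ≤ (1 / 2 : ENNReal) ^ k
  | 0 => by
    have : Dset p 0 = ({[]} : Set (List Bool)) := rfl
    rw [this, tsum_singleton ([] : List Bool)
      (fun σ => (1 / 2 : ENNReal) ^ σ.length)]
    simp
  | (k+1) => by
    have hD : Dset p (k+1) = ⋃ ρ ∈ Dset p k, Fset p ρ := rfl
    calc ∑' σ : Dset p (k+1), (1 / 2 : ENNReal) ^ (σ : List Bool).length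
        ≤ ∑' ρ : Dset p k, ∑' σ : Fset p (ρ : List Bool), (1 / 2 : ENNReal) ^ (σ : List Bool).length := by
          rw [hD]
          exact ENNReal.tsum_biUnion_le_tsum
            (fun σ : List Bool => (1 / 2 : ENNReal) ^ σ.length) (Dset p k) (Fset p)
      _ ≤ ∑' ρ : Dset p k, (1 / 2 : ENNReal) ^ ((ρ : List Bool).length + 1) :=
          ENNReal.tsum_le_tsum fun ρ => Fset_sum p μ hμ _
      _ = (1 / 2) * ∑' ρ : Dset p k, (1 / 2 : ENNReal) ^ (ρ : List Bool).length := by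
          rw [← ENNReal.tsum_mul_left]
          refine tsum_congr fun ρ => ?_
          rw [pow_succ]; ring
      _ ≤ (1 / 2) * (1 / 2 : ENNReal) ^ k := by gcongr; exact Dsum_le p μ hμ k
      _ = (1 / 2 : ENNReal) ^ (k+1) := by rw [pow_succ]; ring

lemma covers (p : List Bool → Option Bool) {y : ℕ → Bool}
    (h1 : {n : ℕ | (p (pre y n)).isSome}.Infinite)
    (h2 : ∀ n b, p (pre y n) = some b → y n = b) :
    ∀ k, ∃ σ ∈ Dset p k, y ∈ cyl σ := by
  intro k
  induction k with
  | zero => exact ⟨[], rfl, by simp [cyl, pre]⟩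
  | succ k ih =>
    obtain ⟨σ, hσ, hy⟩ := ih
    have hex : ∃ n, σ.length ≤ n ∧ (p (pre y n)).isSome := by
      obtain ⟨n, hn, hgt⟩ := h1.exists_gt σ.length
      exact ⟨n, le_of_lt hgt, hn⟩
    set n := Nat.find hex with hn
    obtain ⟨hle, hsome⟩ := Nat.find_spec hex
    obtain ⟨b, hb⟩ := Option.isSome_iff_exists.mp hsome
    have hτ : pre y n ∈ Tset p σ := by
      refine ⟨?_, ?_, hsome⟩
      · rw [List.prefix_iff_eq_take, pre_take y hle]
        exact hy.symm
      · intro m hm hmn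
        rw [pre_length] at hmn
        rw [pre_take y (le_of_lt hmn)]
        have := Nat.find_min hex hmn
        rw [Option.eq_none_iff_forall_not_mem]
        intro a ha
        exact this ⟨hm, Option.isSome_iff_exists.mpr ⟨a, ha⟩⟩
    have hyb : y n = b := h2 n b hb
    refine ⟨pre y (n+1), ?_, ?_⟩
    · show pre y (n+1) ∈ ⋃ ρ ∈ Dset p k, Fset p ρ
      refine Set.mem_biUnion hσ ⟨pre y n, hτ, b, hb, ?_⟩
      rw [pre_succ, hyb]
    · show pre y (pre y (n+1)).length = pre y (n+1)
      rw [pre_length]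

/-- For any prediction `p` (a partial map from finite binary strings to bits),
the set of `p`-predictable reals — those `y` such that `p(y↾n)` is defined for
infinitely many `n` and `y(n) = p(y↾n)` whenever defined — has measure zero
with respect to the uniform measure `μ` on Cantor space. -/
theorem predictable_null (p : List Bool → Option Bool)
    (μ : Measure (ℕ → Bool))
    (hμ : ∀ σ : List Bool, μ (cyl σ) = (1 / 2 : ENNReal) ^ σ.length) :
    μ {y : ℕ → Bool |
        {n : ℕ | (p (pre y n)).isSome}.Infinite ∧
        ∀ n b, p (pre y n) = some b → y n = b} = 0 := by
  set A := {y : ℕ → Bool |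
      {n : ℕ | (p (pre y n)).isSome}.Infinite ∧
      ∀ n b, p (pre y n) = some b → y n = b} with hA
  have key : ∀ k, μ A ≤ (1 / 2 : ENNReal) ^ k := by
    intro k
    have hsub : A ⊆ ⋃ σ : Dset p k, cyl (σ : List Bool) := by
      intro y hy
      obtain ⟨σ, hσ, hyσ⟩ := covers p hy.1 hy.2 k
      exact Set.mem_iUnion.mpr ⟨⟨σ, hσ⟩, hyσ⟩
    calc μ A ≤ μ (⋃ σ : Dset p k, cyl (σ : List Bool)) := measure_mono hsub
      _ ≤ ∑' σ : Dset p k, μ (cyl (σ : List Bool)) := measure_iUnion_le _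
      _ = ∑' σ : Dset p k, (1 / 2 : ENNReal) ^ (σ : List Bool).length :=
          tsum_congr fun σ => hμ σ
      _ ≤ (1 / 2 : ENNReal) ^ k := Dsum_le p μ hμ k
  have htend : Filter.Tendsto (fun k : ℕ => (1 / 2 : ENNReal) ^ k) Filter.atTop (nhds 0) :=
    ENNReal.tendsto_pow_atTop_nhds_zero_of_lt_one (by norm_num)
  exact le_antisymm (ge_of_tendsto' htend key) zero_le
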